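/- arXiv:2310.20133 — 2 statements merged into one kernel-verified Lean document; each statement's English description precedes it below -/
import Mathlib

section
/- Let $k$ be a field and let $K_0, \dots, K_m$ be finite field extensions of $k$ with $m \ge 1$ and $K_{m-1} \subseteq K_m$. Consider the multinorm-one group $T = \{(x_0,\dots,x_m) \in \prod_{i=0}^m K_i^\times : \prod_{i=0}^m N_{K_i/k}(x_i) = 1\}$ and $T' = \{(x_0,\dots,x_{m-1}) \in \prod_{i=0}^{m-1} K_i^\times : \prod_{i=0}^{m-1} N_{K_i/k}(x_i) = 1\}$. Then the map $(x_0,\dots,x_m) \mapsto ((x_0, \dots, x_{m-2}, x_{m-1} \cdot N_{K_m/K_{m-1}}(x_m)), x_m)$ defines a group isomorphism $T \cong T' \times K_m^\times$. -/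
section Aux

open Matrix

variable {R L : Type*} [CommRing R] [CommRing L]
variable {ι κ : Type*} [Fintype ι] [Fintype κ] [DecidableEq ι] [DecidableEq κ]

/-- Blockify: apply `f : L →+* Matrix ι ι R` entrywise to a `κ × κ` matrix over `L`,
obtaining a big `(ι × κ) × (ι × κ)` matrix over `R`, as a ring hom. -/
def bigHom (f : L →+* Matrix ι ι R) : Matrix κ κ L →+* Matrix (ι × κ) (ι × κ) R where
  toFun M := Matrix.of fun p q => f (M p.2 q.2) p.1 q.1
  map_one' := by
    ext ⟨a, p⟩ ⟨b, q⟩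
    by_cases h : p = q
    · subst h; simp [Matrix.one_apply, Prod.ext_iff]
    · simp [Matrix.one_apply, Prod.ext_iff, h]
  map_mul' M N := by
    ext ⟨a, p⟩ ⟨b, q⟩
    simp only [Matrix.of_apply, Matrix.mul_apply, map_sum, _root_.map_mul]
    rw [Fintype.sum_prod_type]
    rw [Finset.sum_comm]
    simp [Matrix.mul_apply, Matrix.sum_apply]
  map_zero' := by ext ⟨a, p⟩ ⟨b, q⟩; simp
  map_add' M N := by ext ⟨a, p⟩ ⟨b, q⟩; simp

@[simp] lemma bigHom_apply (f : L →+* Matrix ι ι R) (M : Matrix κ κ L) (p q) :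
    bigHom f M p q = f (M p.2 q.2) p.1 q.1 := rfl

variable {k : Type*} [Field k] {F : Type*} [Field F]

lemma det_bigHom_transvection (f : F →+* Matrix ι ι k) {i j : κ} (hij : i ≠ j) (c : F) :
    (bigHom f (Matrix.transvection i j c)).det = 1 := by
  classical
  set w : ι × κ → ℕ := fun p => if p.2 = i then 0 else if p.2 = j then 2 else 1 with hw
  set E : Matrix (ι × κ) (ι × κ) k := bigHom f (Matrix.single i j c) with hE
  have hsplit : bigHom f (Matrix.transvection i j c) = 1 + E := by
    rw [Matrix.transvection, map_add, _root_.map_one]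
  have hEzero : ∀ p q : ι × κ, ¬(p.2 = i ∧ q.2 = j) → E p q = 0 := by
    intro p q h
    rw [hE, bigHom_apply, Matrix.single_apply_of_ne _ _ _ _ _ (by tauto), map_zero]
    rfl
  have hBT : (bigHom f (Matrix.transvection i j c)).BlockTriangular w := by
    intro p q hlt
    have hpq2 : p.2 ≠ q.2 := fun h => by rw [hw] at hlt; simp only [h] at hlt; exact lt_irrefl _ hlt
    have hpq : p ≠ q := fun h => hpq2 (by rw [h])
    have hnot : ¬(p.2 = i ∧ q.2 = j) := by
      rintro ⟨hpi, hqj⟩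
      rw [hw] at hlt
      simp [hpi, hqj, hij.symm] at hlt
    rw [hsplit, Matrix.add_apply, Matrix.one_apply_ne hpq, hEzero p q hnot, add_zero]
  rw [hBT.det]
  apply Finset.prod_eq_one
  intro t _
  have hblock : (bigHom f (Matrix.transvection i j c)).toSquareBlock w t = 1 := by
    ext ⟨p, hp⟩ ⟨q, hq⟩
    have hnot : ¬(p.2 = i ∧ q.2 = j) := by
      rintro ⟨hpi, hqj⟩
      rw [hw] at hp hq
      simp [hpi] at hp
      simp [hqj, hij.symm] at hq
      omega
    have : (bigHom f (Matrix.transvection i j c)).toSquareBlock w t ⟨p, hp⟩ ⟨q, hq⟩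
        = (1 : Matrix (ι × κ) (ι × κ) k) p q := by
      rw [Matrix.toSquareBlock_def]
      show (bigHom f (Matrix.transvection i j c)) p q = _
      rw [hsplit, Matrix.add_apply, hEzero p q hnot, add_zero]
    rw [this]
    by_cases h : p = q
    · subst h; simp [Matrix.one_apply]
    · rw [Matrix.one_apply_ne h, Matrix.one_apply_ne (by simpa [Subtype.mk_eq_mk] using h)]
  rw [hblock, Matrix.det_one]

lemma det_bigHom_diagonal (f : F →+* Matrix ι ι k) (d : κ → F) :
    (bigHom f (Matrix.diagonal d)).det = (f (Matrix.diagonal d).det).det := by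
  classical
  have hb : bigHom f (Matrix.diagonal d) = Matrix.blockDiagonal fun p => f (d p) := by
    ext ⟨a, p⟩ ⟨b, q⟩
    by_cases h : p = q
    · subst h; simp [Matrix.blockDiagonal_apply]
    · simp [Matrix.diagonal_apply_ne _ h, Matrix.blockDiagonal_apply, h]
  rw [hb, Matrix.det_blockDiagonal, Matrix.det_diagonal]
  calc (∏ p : κ, (f (d p)).det)
      = (Finset.univ.toList.map fun p => (f (d p)).det).prod := (Finset.prod_map_toList _ _).symm
    _ = ((((Finset.univ.toList.map d).map f).map Matrix.det)).prod := by
        rw [List.map_map, List.map_map]; rfl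
    _ = (((Finset.univ.toList.map d).map f)).prod.det := by
        have := (map_list_prod (Matrix.detMonoidHom (n := ι) (R := k))
          ((Finset.univ.toList.map d).map f)).symm
        simpa [Matrix.coe_detMonoidHom] using this
    _ = (f ((Finset.univ.toList.map d).prod)).det := by rw [map_list_prod]
    _ = (f (∏ i : κ, d i)).det := by rw [Finset.prod_map_toList]

lemma det_bigHom (f : F →+* Matrix ι ι k) (M : Matrix κ κ F) :
    (bigHom f M).det = (f M.det).det := by
  classical
  induction M using Matrix.diagonal_transvection_induction with
  | hdiag D _ => exact det_bigHom_diagonal f D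
  | htransvec t =>
    obtain ⟨i, j, hij, c⟩ := t
    rw [Matrix.TransvectionStruct.toMatrix_mk, det_bigHom_transvection f hij c,
      Matrix.det_transvection_of_ne _ _ hij, _root_.map_one, Matrix.det_one]
  | hmul A B hA hB =>
    rw [_root_.map_mul, Matrix.det_mul, hA, hB, ← Matrix.det_mul, ← _root_.map_mul,
      ← Matrix.det_mul]

/-- Transitivity of the field norm for finite extensions, no separability needed. -/
theorem norm_tower (k L F : Type*) [Field k] [Field L] [Field F] [Algebra k L] [Algebra k F]
    [Algebra L F] [IsScalarTower k L F] [FiniteDimensional k L] [FiniteDimensional L F]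
    (y : F) : Algebra.norm k (Algebra.norm L y) = Algebra.norm k y := by
  classical
  let b := Module.finBasis k L
  let c := Module.finBasis L F
  rw [Algebra.norm_eq_matrix_det (b.smulTower c) y, Algebra.norm_eq_matrix_det c y]
  have hmat : Algebra.leftMulMatrix (b.smulTower c) y
      = bigHom (Algebra.leftMulMatrix b).toRingHom (Algebra.leftMulMatrix c y) := by
    ext ⟨i, p⟩ ⟨j, q⟩
    rw [Algebra.smulTower_leftMulMatrix]
    rfl
  rw [hmat, det_bigHom, Algebra.norm_eq_matrix_det b]
  rfl
end Aux

/-- The multinorm homomorphism $\prod_i K_i^× → k^×$, $(x_i) ↦ \prod_i N_{K_i/k}(x_i)$. -/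
noncomputable def multinorm (k : Type) [Field k] {m : ℕ} (K : Fin m → Type)
    [∀ i, Field (K i)] [∀ i, Algebra k (K i)] : (∀ i, (K i)ˣ) →* kˣ :=
  MonoidHom.mk' (fun x => ∏ i, Units.map (Algebra.norm k : K i →* k) (x i))
    (by
      intro a b
      rw [← Finset.prod_mul_distrib]
      exact Finset.prod_congr rfl fun i _ => by simp [map_mul])

/-- The multinorm homomorphism on $\left(\prod_{i<m} K_i^×\right) × L^×$ (with $L$ playing
the role of the last factor $K_m$). -/
noncomputable def multinormFull (k : Type) [Field k] {m : ℕ} (K : Fin m → Type)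
    [∀ i, Field (K i)] [∀ i, Algebra k (K i)] (L : Type) [Field L] [Algebra k L] :
    ((∀ i, (K i)ˣ) × Lˣ) →* kˣ :=
  MonoidHom.mk' (fun z => multinorm k K z.1 * Units.map (Algebra.norm k : L →* k) z.2)
    (by
      intro a b
      simp only [Prod.fst_mul, Prod.snd_mul, map_mul]
      exact mul_mul_mul_comm _ _ _ _)

/-- Let $K_0,…,K_m$ ($m ≥ 1$) be finite extensions of $k$ with
$K_{m-1} ⊆ K_m$.  Here the first $m$ fields are `K : Fin (n+1) → Type` (with `m = n+1`,
so $K_{m-1}$ = `K (Fin.last n)`) and $K_m$ = `L`.  The multinorm-one group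
$T = \{x : \prod_i N_{K_i/k}(x_i) = 1\}$ is isomorphic to $T' × K_m^×$ (where $T'$ omits
the last factor) via
$(x_0,…,x_m) ↦ ((x_0,…,x_{m-2}, x_{m-1}·N_{K_m/K_{m-1}}(x_m)), x_m)$. -/
theorem stmt10 (k : Type) [Field k] (n : ℕ) (K : Fin (n + 1) → Type)
    [∀ i, Field (K i)] [∀ i, Algebra k (K i)] [∀ i, FiniteDimensional k (K i)]
    (L : Type) [Field L] [Algebra k L] [FiniteDimensional k L]
    [Algebra (K (Fin.last n)) L] [IsScalarTower k (K (Fin.last n)) L]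
    [FiniteDimensional (K (Fin.last n)) L] :
    ∃ e : (multinormFull k K L).ker ≃* (multinorm k K).ker × Lˣ,
      ∀ z : (multinormFull k K L).ker,
        (((e z).1 : ∀ i, (K i)ˣ) =
            Function.update ((z : (∀ i, (K i)ˣ) × Lˣ)).1 (Fin.last n)
              (((z : (∀ i, (K i)ˣ) × Lˣ)).1 (Fin.last n) *
                Units.map (Algebra.norm (K (Fin.last n)) : L →* K (Fin.last n))
                  ((z : (∀ i, (K i)ˣ) × Lˣ)).2)) ∧
          ((e z).2 = ((z : (∀ i, (K i)ˣ) × Lˣ)).2) := by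
  classical
  -- key computation: multinorm of an update at (Fin.last n)
  have key : ∀ (x : ∀ i, (K i)ˣ) (c : (K (Fin.last n))ˣ),
      multinorm k K (Function.update x (Fin.last n) (x (Fin.last n) * c))
        = multinorm k K x * Units.map (Algebra.norm k : K (Fin.last n) →* k) c := by
    intro x c
    show (∏ i, Units.map (Algebra.norm k : K i →* k) (Function.update x (Fin.last n) (x (Fin.last n) * c) i)) = _
    have h1 : ∀ i, Units.map (Algebra.norm k : K i →* k) (Function.update x (Fin.last n) (x (Fin.last n) * c) i)
        = Function.update (fun i => Units.map (Algebra.norm k : K i →* k) (x i)) (Fin.last n)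
            (Units.map (Algebra.norm k : K (Fin.last n) →* k) (x (Fin.last n) * c)) i := fun i =>
      (Function.apply_update (fun i (xi : (K i)ˣ) =>
        Units.map (Algebra.norm k : K i →* k) xi) x (Fin.last n) (x (Fin.last n) * c) i)
    rw [Finset.prod_congr rfl fun i _ => h1 i,
      Finset.prod_update_of_mem (Finset.mem_univ (Fin.last n))]
    show _ = (∏ i, Units.map (Algebra.norm k : K i →* k) (x i)) * _
    rw [← Finset.mul_prod_erase Finset.univ _ (Finset.mem_univ (Fin.last n)), _root_.map_mul,
      Finset.sdiff_singleton_eq_erase]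
    exact mul_right_comm _ _ _
  -- compatibility of norms via the tower
  have compat : ∀ y : Lˣ,
      Units.map (Algebra.norm k : K (Fin.last n) →* k)
        (Units.map (Algebra.norm (K (Fin.last n)) : L →* K (Fin.last n)) y)
        = Units.map (Algebra.norm k : L →* k) y := by
    intro y
    ext
    exact norm_tower k (K (Fin.last n)) L (y : L)
  -- the forward map lands in the kernel
  have memT' : ∀ z : (multinormFull k K L).ker,
      Function.update (z : (∀ i, (K i)ˣ) × Lˣ).1 (Fin.last n)
        ((z : (∀ i, (K i)ˣ) × Lˣ).1 (Fin.last n) * (Units.map (Algebra.norm (K (Fin.last n)) : L →* K (Fin.last n))) (z : (∀ i, (K i)ˣ) × Lˣ).2)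
        ∈ (multinorm k K).ker := by
    rintro ⟨⟨x, y⟩, hz⟩
    rw [MonoidHom.mem_ker] at hz ⊢
    rw [key, compat]
    exact hz
  have memT : ∀ (a : (multinorm k K).ker) (y : Lˣ),
      (Function.update (a : ∀ i, (K i)ˣ) (Fin.last n) ((a : ∀ i, (K i)ˣ) (Fin.last n) * ((Units.map (Algebra.norm (K (Fin.last n)) : L →* K (Fin.last n))) y)⁻¹), y)
        ∈ (multinormFull k K L).ker := by
    rintro ⟨x, hx⟩ y
    rw [MonoidHom.mem_ker] at hx ⊢
    show multinorm k K _ * Units.map (Algebra.norm k : L →* k) y = 1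
    rw [key, hx, map_inv, compat, one_mul, inv_mul_cancel]
  refine ⟨MulEquiv.mk' ⟨
      fun z => (⟨_, memT' z⟩, (z : (∀ i, (K i)ˣ) × Lˣ).2),
      fun w => ⟨_, memT w.1 w.2⟩, ?_, ?_⟩ ?_, ?_⟩
  · rintro ⟨⟨x, y⟩, hz⟩
    apply Subtype.ext
    apply Prod.ext
    · show Function.update (Function.update x (Fin.last n) (x (Fin.last n) * (Units.map (Algebra.norm (K (Fin.last n)) : L →* K (Fin.last n))) y)) (Fin.last n)
        (Function.update x (Fin.last n) (x (Fin.last n) * (Units.map (Algebra.norm (K (Fin.last n)) : L →* K (Fin.last n))) y) (Fin.last n) * ((Units.map (Algebra.norm (K (Fin.last n)) : L →* K (Fin.last n))) y)⁻¹) = x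
      rw [Function.update_self, Function.update_idem, mul_inv_cancel_right,
        Function.update_eq_self]
    · rfl
  · rintro ⟨⟨x, hx⟩, y⟩
    apply Prod.ext
    · apply Subtype.ext
      show Function.update (Function.update x (Fin.last n) (x (Fin.last n) * ((Units.map (Algebra.norm (K (Fin.last n)) : L →* K (Fin.last n))) y)⁻¹)) (Fin.last n)
        (Function.update x (Fin.last n) (x (Fin.last n) * ((Units.map (Algebra.norm (K (Fin.last n)) : L →* K (Fin.last n))) y)⁻¹) (Fin.last n) * (Units.map (Algebra.norm (K (Fin.last n)) : L →* K (Fin.last n))) y) = x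
      rw [Function.update_self, Function.update_idem, inv_mul_cancel_right,
        Function.update_eq_self]
    · rfl
  · rintro ⟨⟨x, y⟩, hz⟩ ⟨⟨x', y'⟩, hz'⟩
    apply Prod.ext
    · apply Subtype.ext
      show Function.update (x * x') (Fin.last n) ((x * x') (Fin.last n) * (Units.map (Algebra.norm (K (Fin.last n)) : L →* K (Fin.last n))) (y * y'))
          = Function.update x (Fin.last n) (x (Fin.last n) * (Units.map (Algebra.norm (K (Fin.last n)) : L →* K (Fin.last n))) y) * Function.update x' (Fin.last n) (x' (Fin.last n) * (Units.map (Algebra.norm (K (Fin.last n)) : L →* K (Fin.last n))) y')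
      funext i
      by_cases h : i = (Fin.last n)
      · subst h
        simp only [Function.update_self, Pi.mul_apply, _root_.map_mul]
        exact mul_mul_mul_comm _ _ _ _
      · simp [Function.update_of_ne h]
    · rfl
  · exact fun z => ⟨rfl, rfl⟩
end

section
/- Let $p$ be a prime and $e \ge e_1 \ge \dots \ge e_m \ge 0$ integers. For each place-index $v$ in an index set $\Omega$, suppose given integers $e(v) \le e$ and $e_i(v) \le \min\{e(v), e_i\}$ for each $i$. Say $a = (a_1, \dots, a_m) \in \bigoplus_{i=1}^m \mathbb{Z}/p^{e_i}\mathbb{Z}$ is locally diagonal at $v$ if there exists $n \in \mathbb{Z}/p^{e(v)}\mathbb{Z}$ with $n \equiv a_i \pmod{p^{e_i(v)}}$ for all $i$. For $n \in \mathbb{Z}/p^{e_1}\mathbb{Z}$ let $I_n(a) = \{i : n \equiv a_i \pmod{p^{e_i}}\}$ and $\Omega(I_n(a)) = \{v \in \Omega : n \equiv a_i \pmod{p^{e_i(v)}} \text{ for all } i \notin I_n(a)\}$. Then $a$ is locally diagonal at every $v \in \Omega$ if and only if $\bigcup_{n \in \mathbb{Z}/p^{e_1}\mathbb{Z}} \Omega(I_n(a))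 = \Omega$. -/
private lemma castHom_eq_val_cast {N M : ℕ} [NeZero N] (h : M ∣ N) (x : ZMod N) :
    ZMod.castHom h (ZMod M) x = ((x.val : ℕ) : ZMod M) := by
  rw [ZMod.castHom_apply, ZMod.natCast_val]

/-- The combinatorial core of Lemma 4.12: with levels
$e_i ≤ E$ and local levels $e_i(v) ≤ \min(e(v), e_i)$, an element
$a ∈ \bigoplus_i ℤ/p^{e_i}ℤ$ is locally diagonal at every $v$ iff
$\bigcup_{n ∈ ℤ/p^{E}ℤ} Ω(I_n(a)) = Ω$. -/
theorem stmt18 (p : ℕ) (hp : p.Prime) (m : ℕ) (Ω : Type)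
    (E : ℕ) (ei : Fin m → ℕ) (hei : ∀ i, ei i ≤ E)
    (ev : Ω → ℕ) (eiv : Fin m → Ω → ℕ)
    (h1 : ∀ i v, eiv i v ≤ ev v) (h2 : ∀ i v, eiv i v ≤ ei i)
    (a : ∀ i : Fin m, ZMod (p ^ ei i)) :
    (∀ v : Ω, ∃ n : ZMod (p ^ ev v), ∀ i : Fin m,
        ZMod.castHom (pow_dvd_pow p (h1 i v)) (ZMod (p ^ eiv i v)) n =
          ZMod.castHom (pow_dvd_pow p (h2 i v)) (ZMod (p ^ eiv i v)) (a i)) ↔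
      ∀ v : Ω, ∃ n : ZMod (p ^ E), ∀ i : Fin m,
        ZMod.castHom (pow_dvd_pow p (hei i)) (ZMod (p ^ ei i)) n ≠ a i →
          ZMod.castHom (pow_dvd_pow p (h2 i v)) (ZMod (p ^ eiv i v))
              (ZMod.castHom (pow_dvd_pow p (hei i)) (ZMod (p ^ ei i)) n) =
            ZMod.castHom (pow_dvd_pow p (h2 i v)) (ZMod (p ^ eiv i v)) (a i) := by
  have hpos : ∀ k : ℕ, NeZero (p ^ k) := fun k => ⟨(pow_pos hp.pos k).ne'⟩
  constructor
  · intro H v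
    obtain ⟨n', hn'⟩ := H v
    haveI := hpos (ev v)
    refine ⟨((n'.val : ℕ) : ZMod (p ^ E)), fun i _ => ?_⟩
    rw [map_natCast, map_natCast, ← castHom_eq_val_cast (pow_dvd_pow p (h1 i v)) n']
    exact hn' i
  · intro H v
    obtain ⟨n, hn⟩ := H v
    haveI := hpos E
    refine ⟨((n.val : ℕ) : ZMod (p ^ ev v)), fun i => ?_⟩
    rw [map_natCast]
    by_cases hcase : ZMod.castHom (pow_dvd_pow p (hei i)) (ZMod (p ^ ei i)) n = a i
    · rw [← hcase, ← RingHom.comp_apply, ZMod.castHom_comp, castHom_eq_val_cast]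
    · rw [← hn i hcase, ← RingHom.comp_apply, ZMod.castHom_comp, castHom_eq_val_cast]
end
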